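/- arXiv:1209.1382 — 3 statements merged into one kernel-verified Lean document; each statement's English description precedes it below -/
import Mathlib

section
/- If a projection P is compatible with an operation Φ (i.e., there exists an instrument I on a finite set Ω and sets X, Y ⊆ Ω with I(X, I) = P and I(Y,·) = Φ(·)), then [Φ(T), P] = 0 for all T ∈ L(K). -/
open Matrix ComplexOrder
open scoped Kronecker

noncomputable section

/-- `n × n` complex matrices, modelling operators on an `n`-dimensional Hilbert space. -/
abbrev Mat (n : ℕ) := Matrix (Fin n) (Fin n) ℂ

/-- An effect: an operator `E` with `0 ≤ E ≤ I` in the Loewner order. -/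
def IsEffect {n : ℕ} (E : Mat n) : Prop := E.PosSemidef ∧ ((1 : Mat n) - E).PosSemidef

/-- The extension `Φ ⊗ id_k` of a map between matrix algebras, acting on block matrices. -/
def cpExt {m n : ℕ} (Φ : Mat m →ₗ[ℂ] Mat n) (k : ℕ)
    (M : Matrix (Fin m × Fin k) (Fin m × Fin k) ℂ) :
    Matrix (Fin n × Fin k) (Fin n × Fin k) ℂ :=
  Matrix.of fun p q => Φ (Matrix.of fun a b => M (a, p.2) (b, q.2)) p.1 q.1

/-- Complete positivity of a linear map between matrix algebras. -/
def IsCP {m n : ℕ} (Φ : Mat m →ₗ[ℂ] Mat n) : Prop :=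
  ∀ (k : ℕ) (M : Matrix (Fin m × Fin k) (Fin m × Fin k) ℂ),
    M.PosSemidef → (cpExt Φ k M).PosSemidef

/-!
Splitting `Y` into `Y ∩ X` and `Y \ X` writes `Φ` as a sum of two positive maps `Ψ₁`, `Ψ₂` with
`Ψ₁ 1 ≤ P` and `Ψ₂ 1 ≤ 1 - P`. If `Ψ` is positive and `Ψ 1 ≤ p` for a projection `p`, then every
positive contraction `a` satisfies `0 ≤ Ψ a ≤ p`, and a positive element below a projection
commutes with it. Positive contractions span the whole algebra, so `Ψ a` commutes with `p` for
every `a`; applied to `P` and to `1 - P` this gives the claim.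
-/

open scoped MatrixOrder Matrix.Norms.L2Operator

lemma IsCP.map_nonneg {m n : ℕ} {Φ : Mat m →ₗ[ℂ] Mat n} (hΦ : IsCP Φ) {T : Mat m}
    (hT : 0 ≤ T) : 0 ≤ Φ T := by
  rw [nonneg_iff_posSemidef] at hT ⊢
  have key : Φ T = (cpExt Φ 1 (T.submatrix Prod.fst Prod.fst)).submatrix
      (fun i : Fin n => (i, (0 : Fin 1))) (fun i => (i, 0)) := rfl
  rw [key]
  exact (hΦ 1 _ (hT.submatrix _)).submatrix _

lemma PositiveLinearMap.sum_apply {R E₁ E₂ ι : Type*} [Semiring R] [AddCommMonoid E₁]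
    [PartialOrder E₁] [AddCommMonoid E₂] [PartialOrder E₂] [IsOrderedAddMonoid E₂]
    [Module R E₁] [Module R E₂] (s : Finset ι) (f : ι → E₁ →ₚ[R] E₂) (x : E₁) :
    (∑ i ∈ s, f i) x = ∑ i ∈ s, f i x :=
  map_sum (⟨⟨fun g => g x, rfl⟩, fun _ _ => rfl⟩ : (E₁ →ₚ[R] E₂) →+ E₂) f s

section

variable {A B : Type*} [CStarAlgebra A] [PartialOrder A] [StarOrderedRing A]
  [NonUnitalCStarAlgebra B] [PartialOrder B] [StarOrderedRing B]

lemma PositiveLinearMap.commute_apply_of_apply_one_le (Ψ : A →ₚ[ℂ] B) {p : B}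
    (hp : IsStarProjection p) (hΨp : Ψ 1 ≤ p) (a : A) : Commute (Ψ a) p := by
  have ha : a ∈ Submodule.span ℂ ({b : A | 0 ≤ b} ∩ Metric.closedBall 0 1) := by
    simp [CStarAlgebra.span_nonneg_inter_unitClosedBall]
  induction ha using Submodule.span_induction with
  | mem b hb =>
    obtain ⟨hb0, hb1⟩ := hb
    have hb1 : b ≤ 1 :=
      (CStarAlgebra.norm_le_one_iff_of_nonneg b).mp (mem_closedBall_zero_iff.mp hb1)
    obtain ⟨hbp, hpb⟩ := hp.mul_right_and_mul_left_of_nonneg_of_le (Ψ.map_nonneg hb0)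
      ((Ψ.monotone' hb1).trans hΨp)
    exact hbp.trans hpb.symm
  | zero => simp
  | add x y _ _ hx hy => simpa using hx.add_left hy
  | smul c x _ hx => simpa using hx.smul_left c

lemma commute_sum_apply_of_sum_apply_one_le {Ω : Type*} (J : Ω → A →ₚ[ℂ] B) {F : Finset Ω}
    {p : B} (hp : IsStarProjection p) (hF : ∑ x ∈ F, J x 1 ≤ p) (a : A) :
    Commute (∑ x ∈ F, J x a) p := by
  simpa only [PositiveLinearMap.sum_apply] using
    (∑ x ∈ F, J x).commute_apply_of_apply_one_le hp (by rwa [PositiveLinearMap.sum_apply]) a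

end

theorem commute_sum_apply_of_isStarProjection_sum_apply_one {A B : Type*} [CStarAlgebra A]
    [PartialOrder A] [StarOrderedRing A] [CStarAlgebra B] [PartialOrder B] [StarOrderedRing B]
    {Ω : Type*} [Fintype Ω] (J : Ω → A →ₚ[ℂ] B) (hJ : ∑ x, J x 1 = 1) {X : Finset Ω}
    (hX : IsStarProjection (∑ x ∈ X, J x 1)) (Y : Finset Ω) (a : A) :
    Commute (∑ x ∈ Y, J x a) (∑ x ∈ X, J x 1) := by
  classical
  have sum_one_mono {F G : Finset Ω} (h : F ⊆ G) : ∑ x ∈ F, J x 1 ≤ ∑ x ∈ G, J x 1 :=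
    Finset.sum_le_sum_of_subset_of_nonneg h fun x _ _ => (J x).map_nonneg zero_le_one
  have sum_compl : ∑ x ∈ Xᶜ, J x 1 = 1 - ∑ x ∈ X, J x 1 :=
    eq_sub_of_add_eq' (hJ ▸ Finset.sum_add_sum_compl X _)
  have inside : Commute (∑ x ∈ Y ∩ X, J x a) (∑ x ∈ X, J x 1) :=
    commute_sum_apply_of_sum_apply_one_le J hX (sum_one_mono Finset.inter_subset_right) a
  have outside : Commute (∑ x ∈ Y \ X, J x a) (1 - ∑ x ∈ X, J x 1) :=
    commute_sum_apply_of_sum_apply_one_le J hX.one_sub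
      (sum_compl ▸ sum_one_mono fun _ hx => Finset.mem_compl.mpr (Finset.mem_sdiff.mp hx).2) a
  rw [← Finset.sum_inter_add_sum_sdiff Y X]
  exact inside.add_left (by simpa using (Commute.one_right _).sub_right outside)

theorem projection_compatible_operation_commutes_general {m n : ℕ} {Ω : Type*} [Fintype Ω]
    (I : Ω → (Mat m →ₗ[ℂ] Mat n))
    (hICP : ∀ x, IsCP (I x))
    (hIunit : (∑ x, I x) (1 : Mat m) = (1 : Mat n))
    (P : Mat n) (hP : P.IsHermitian) (hP2 : P * P = P)
    (Φ : Mat m →ₗ[ℂ] Mat n)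
    (X Y : Finset Ω)
    (hPX : (∑ x ∈ X, I x) (1 : Mat m) = P)
    (hΦY : ∀ T : Mat m, Φ T = ∑ x ∈ Y, I x T) :
    ∀ T : Mat m, Commute (Φ T) P := by
  intro T
  let J x : Mat m →ₚ[ℂ] Mat n := .mk₀ (I x) fun _ => (hICP x).map_nonneg
  rw [LinearMap.sum_apply] at hPX hIunit
  rw [hΦY, ← hPX]
  exact commute_sum_apply_of_isStarProjection_sum_apply_one J hIunit (hPX ▸ ⟨hP2, hP⟩) Y T

/-- If a projection `P` is compatible with an operation `Φ` (both are parts of a single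
instrument), then `Φ(T)` commutes with `P` for every `T`. -/
theorem projection_compatible_operation_commutes {m n : ℕ} {Ω : Type*} [Fintype Ω]
    [DecidableEq Ω]
    (I : Ω → (Mat m →ₗ[ℂ] Mat n))
    (hICP : ∀ x, IsCP (I x))
    (hIop : ∀ x, ((1 : Mat n) - I x 1).PosSemidef)
    (hIunit : (∑ x, I x) (1 : Mat m) = (1 : Mat n))
    (P : Mat n) (hP : P.IsHermitian) (hP2 : P * P = P)
    (Φ : Mat m →ₗ[ℂ] Mat n)
    (X Y : Finset Ω)
    (hPX : (∑ x ∈ X, I x) (1 : Mat m) = P)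
    (hΦY : ∀ T : Mat m, Φ T = ∑ x ∈ Y, I x T) :
    ∀ T : Mat m, Commute (Φ T) P :=
  projection_compatible_operation_commutes_general I hICP hIunit P hP hP2 Φ X Y hPX hΦY
end
end

section
/- Let Φ be an operation (Schrödinger picture, completely positive and trace-nonincreasing) on a finite-dimensional space such that I − Φ*(I) has rank one, where Φ* is its Heisenberg adjoint. Then a channel Λ satisfies Φ ≤ Λ (Λ − Φ completely positive) if and only if Λ(ρ) = Φ(ρ) + (1 − tr(Φ(ρ)))·ξ for some fixed state ξ. -/
open Matrix ComplexOrder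
open scoped Kronecker

noncomputable section

/-!
Write `I - E = w w*`. Then `Λ - Φ` has trace functional `ρ ↦ ⟨w, ρ w⟩`. A completely positive
map `Ψ` with this trace functional sends `y y*` to a positive matrix of trace zero whenever
`y ⊥ w`, hence kills it; positivity of the block matrix `(Ψ (x_i x_j*))` with
`(x_1, x_2) = (x, y)` then kills `x y*` and `y x*` as well. Splitting vectors along `w`
leaves only the `w w*` component, so `Ψ ρ = ⟨w, ρ w⟩ • ξ` with `ξ = Ψ (w w*) / ‖w‖⁴`.
Conversely such a measure-and-prepare map is completely positive: its `k`-fold extension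
is `ξ ⊗ V* M V`.
-/

namespace Matrix

variable {ι 𝕜 : Type*} [RCLike 𝕜]

lemma diagonal_eq_vecMulVec_single [DecidableEq ι] {d : ι → 𝕜} (i₀ : ι)
    (hd : ∀ i, i ≠ i₀ → d i = 0) :
    diagonal d = vecMulVec (d i₀ • Pi.single i₀ 1) (Pi.single i₀ 1) := by
  ext i j
  simp only [diagonal_apply, vecMulVec_apply, Pi.smul_apply, Pi.single_apply, smul_eq_mul]
  split_ifs <;> simp_all

variable [Fintype ι]

lemma trace_mul_vecMulVec_star (ρ : Matrix ι ι 𝕜) (w : ι → 𝕜) :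
    (ρ * vecMulVec w (star w)).trace = star w ⬝ᵥ ρ *ᵥ w := by
  rw [mul_vecMulVec, trace_vecMulVec, dotProduct_comm]

lemma star_dotProduct_vecMulVec_mulVec (w a b : ι → 𝕜) :
    star w ⬝ᵥ vecMulVec a (star b) *ᵥ w = (star w ⬝ᵥ a) * star (star w ⬝ᵥ b) := by
  rw [← star_dotProduct, vecMulVec_mulVec, dotProduct_smul, op_smul_eq_mul]

namespace PosSemidef

variable [DecidableEq ι]

lemma apply_eq_zero_of_diag_eq_zero {C : Matrix ι ι 𝕜} (hC : C.PosSemidef) {q : ι}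
    (hq : C q q = 0) (p : ι) : C p q = 0 := by
  have hcol : C *ᵥ Pi.single q 1 = 0 :=
    (hC.dotProduct_mulVec_zero_iff _).mp (by simpa [mulVec_single_one] using hq)
  simpa [mulVec_single_one] using congrFun hcol p

lemma exists_eq_vecMulVec_of_rank_eq_one {F : Matrix ι ι 𝕜} (hF : F.PosSemidef)
    (hr : F.rank = 1) : ∃ w : ι → 𝕜, w ≠ 0 ∧ F = vecMulVec w (star w) := by
  have hH := hF.isHermitian
  obtain ⟨i₀, huniq⟩ : ∃ i : {i // hH.eigenvalues i ≠ 0}, ∀ j, j = i :=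
    Fintype.card_eq_one_iff.mp (hH.rank_eq_card_non_zero_eigs ▸ hr)
  have hzero : ∀ i, i ≠ i₀.1 → (RCLike.ofReal ∘ hH.eigenvalues) i = (0 : 𝕜) := by
    intro i hi
    by_contra h
    exact hi (congrArg Subtype.val (huniq ⟨i, by simpa using h⟩))
  let U : Matrix ι ι 𝕜 := hH.eigenvectorUnitary
  let s : 𝕜 := (Real.sqrt (hH.eigenvalues i₀) : 𝕜)
  have hs : s * star s = hH.eigenvalues i₀ := by
    simp only [s, RCLike.star_def, RCLike.conj_ofReal, ← RCLike.ofReal_mul,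
      Real.mul_self_sqrt (hF.eigenvalues_nonneg i₀)]
  have hF_eq : F = vecMulVec (s • U *ᵥ Pi.single i₀.1 1) (star (s • U *ᵥ Pi.single i₀.1 1)) := by
    conv_lhs => rw [hH.spectral_theorem, Unitary.conjStarAlgAut_apply,
      diagonal_eq_vecMulVec_single i₀.1 hzero]
    rw [mul_vecMulVec, vecMulVec_mul, star_smul, smul_vecMulVec, vecMulVec_smul, smul_smul, hs,
      star_mulVec, Pi.star_single, star_one, mulVec_smul, smul_vecMulVec]
    rfl
  refine ⟨_, fun hw => ?_, hF_eq⟩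
  rw [hw, star_zero, zero_vecMulVec] at hF_eq
  simp [hF_eq] at hr

end PosSemidef

end Matrix

def measurePrepare {n m : ℕ} (w : Fin n → ℂ) (ξ : Mat m) : Mat n →ₗ[ℂ] Mat m where
  toFun ρ := (star w ⬝ᵥ ρ *ᵥ w) • ξ
  map_add' ρ σ := by simp [add_mulVec, dotProduct_add, add_smul]
  map_smul' c ρ := by simp [smul_mulVec, dotProduct_smul, smul_smul]

lemma measurePrepare_apply {n m : ℕ} (w : Fin n → ℂ) (ξ : Mat m) (ρ : Mat n) :
    measurePrepare w ξ ρ = (star w ⬝ᵥ ρ *ᵥ w) • ξ := rfl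

lemma isCP_measurePrepare {n m : ℕ} (w : Fin n → ℂ) {ξ : Mat m} (hξ : ξ.PosSemidef) :
    IsCP (measurePrepare w ξ) := by
  intro k M hM
  let V : Matrix (Fin n × Fin k) (Fin k) ℂ := of fun b q => if b.2 = q then w b.1 else 0
  have hext : cpExt (measurePrepare w ξ) k M = ξ ⊗ₖ (Vᴴ * M * V) := by
    ext ⟨i, p⟩ ⟨j, q⟩
    simp [cpExt, measurePrepare_apply, V, kroneckerMap_apply, mul_apply, Fintype.sum_prod_type,
      dotProduct, mulVec, Finset.mul_sum, Finset.sum_mul, conjTranspose_apply,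
      apply_ite (starRingEnd ℂ), ite_mul, mul_ite]
    rw [Finset.sum_comm]
    exact Finset.sum_congr rfl fun _ _ => Finset.sum_congr rfl fun _ _ => by ring
  rw [hext]
  exact hξ.kronecker (hM.conjTranspose_mul_mul_same V)

namespace IsCP

variable {n m : ℕ} {Φ : Mat n →ₗ[ℂ] Mat m}

lemma posSemidef_map (hΦ : IsCP Φ) {ρ : Mat n} (hρ : ρ.PosSemidef) : (Φ ρ).PosSemidef :=
  (hΦ 1 _ (hρ.submatrix Prod.fst)).submatrix fun i => (i, 0)

lemma posSemidef_vecMulVec_block (hΦ : IsCP Φ) {k : ℕ} (x : Fin k → Fin n → ℂ) :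
    (of fun p q : Fin m × Fin k => Φ (vecMulVec (x p.2) (star (x q.2))) p.1 q.1).PosSemidef :=
  hΦ k _ (posSemidef_vecMulVec_self_star fun a : Fin n × Fin k => x a.2 a.1)

lemma map_vecMulVec_eq_zero_of_map_self (hΦ : IsCP Φ) {y : Fin n → ℂ}
    (hy : Φ (vecMulVec y (star y)) = 0) (x : Fin n → ℂ) :
    Φ (vecMulVec x (star y)) = 0 ∧ Φ (vecMulVec y (star x)) = 0 := by
  let C : Matrix (Fin m × Fin 2) (Fin m × Fin 2) ℂ :=
    of fun p q => Φ (vecMulVec (![x, y] p.2) (star (![x, y] q.2))) p.1 q.1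
  have hC : C.PosSemidef := hΦ.posSemidef_vecMulVec_block ![x, y]
  have hdiag : ∀ j, C (j, 1) (j, 1) = 0 := by simp [C, hy]
  constructor
  · ext i j
    simpa [C] using hC.apply_eq_zero_of_diag_eq_zero (hdiag j) (i, 0)
  · ext i j
    have h := hC.isHermitian.apply (i, 1) (j, 0)
    rw [hC.apply_eq_zero_of_diag_eq_zero (hdiag i) (j, 0), star_zero] at h
    simpa [C] using h.symm

variable {w : Fin n → ℂ}

lemma map_vecMulVec_eq_zero_of_orthogonal (hΦ : IsCP Φ)
    (htr : ∀ ρ, (Φ ρ).trace = star w ⬝ᵥ ρ *ᵥ w) {y : Fin n → ℂ} (hy : star w ⬝ᵥ y = 0)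
    (x : Fin n → ℂ) : Φ (vecMulVec x (star y)) = 0 ∧ Φ (vecMulVec y (star x)) = 0 := by
  refine hΦ.map_vecMulVec_eq_zero_of_map_self ?_ x
  rw [← (hΦ.posSemidef_map (posSemidef_vecMulVec_self_star y)).trace_eq_zero_iff, htr,
    star_dotProduct_vecMulVec_mulVec, hy, zero_mul]

lemma map_vecMulVec_eq_smul (hΦ : IsCP Φ) (htr : ∀ ρ, (Φ ρ).trace = star w ⬝ᵥ ρ *ᵥ w)
    (hw : w ≠ 0) (x y : Fin n → ℂ) :
    Φ (vecMulVec x (star y)) = star ((star w ⬝ᵥ y) / (star w ⬝ᵥ w)) • Φ (vecMulVec x (star w)) ∧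
      Φ (vecMulVec y (star x)) = ((star w ⬝ᵥ y) / (star w ⬝ᵥ w)) • Φ (vecMulVec w (star x)) := by
  set β := (star w ⬝ᵥ y) / (star w ⬝ᵥ w)
  have hperp : star w ⬝ᵥ (y - β • w) = 0 := by
    rw [dotProduct_sub, dotProduct_smul, smul_eq_mul,
      div_mul_cancel₀ _ (mt dotProduct_star_self_eq_zero.mp hw), sub_self]
  obtain ⟨h₁, h₂⟩ := hΦ.map_vecMulVec_eq_zero_of_orthogonal htr hperp x
  have hy : y = (y - β • w) + β • w := (sub_add_cancel _ _).symm
  constructor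
  · rw [hy, star_add, vecMulVec_add, map_add, h₁, zero_add, star_smul, vecMulVec_smul, map_smul]
  · rw [hy, add_vecMulVec, map_add, h₂, zero_add, smul_vecMulVec, map_smul]

lemma map_vecMulVec (hΦ : IsCP Φ) (htr : ∀ ρ, (Φ ρ).trace = star w ⬝ᵥ ρ *ᵥ w)
    (hw : w ≠ 0) (a b : Fin n → ℂ) :
    Φ (vecMulVec a (star b)) = (star w ⬝ᵥ vecMulVec a (star b) *ᵥ w) •
      ((star w ⬝ᵥ w) ^ 2)⁻¹ • Φ (vecMulVec w (star w)) := by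
  rw [(hΦ.map_vecMulVec_eq_smul htr hw b a).2, (hΦ.map_vecMulVec_eq_smul htr hw w b).1, smul_smul,
    smul_smul, star_dotProduct_vecMulVec_mulVec, star_div₀, ← star_dotProduct w w]
  have hc : star w ⬝ᵥ w ≠ 0 := mt dotProduct_star_self_eq_zero.mp hw
  field_simp

theorem exists_eq_measurePrepare (hΦ : IsCP Φ) (htr : ∀ ρ, (Φ ρ).trace = star w ⬝ᵥ ρ *ᵥ w)
    (hw : w ≠ 0) : ∃ ξ : Mat m, ξ.PosSemidef ∧ ξ.trace = 1 ∧ Φ = measurePrepare w ξ := by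
  have hc : star w ⬝ᵥ w ≠ 0 := mt dotProduct_star_self_eq_zero.mp hw
  refine ⟨((star w ⬝ᵥ w) ^ 2)⁻¹ • Φ (vecMulVec w (star w)), ?_, ?_, ?_⟩
  · exact (hΦ.posSemidef_map (posSemidef_vecMulVec_self_star w)).smul
      (inv_nonneg.mpr (pow_nonneg (dotProduct_star_self_nonneg w) 2))
  · rw [trace_smul, htr, star_dotProduct_vecMulVec_mulVec, ← star_dotProduct, smul_eq_mul, ← sq,
      inv_mul_cancel₀ (pow_ne_zero 2 hc)]
  · refine Matrix.ext_linearMap ℂ fun i j => LinearMap.ext_ring ?_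
    have h := hΦ.map_vecMulVec htr hw (Pi.single i 1) (Pi.single j 1)
    rwa [Pi.star_single, star_one, ← single_eq_single_vecMulVec_single] at h

end IsCP

theorem channel_above_rank_one_deficiency_operation_general {n m : ℕ}
    (Φ : Mat n →ₗ[ℂ] Mat m)
    (E : Mat n) (hE : ∀ ρ : Mat n, (Φ ρ).trace = (ρ * E).trace)
    (hE1pos : ((1 : Mat n) - E).PosSemidef)
    (hrank : ((1 : Mat n) - E).rank = 1)
    (Λ : Mat n →ₗ[ℂ] Mat m) (hΛtr : ∀ ρ : Mat n, (Λ ρ).trace = ρ.trace) :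
    IsCP (Λ - Φ) ↔
      ∃ ξ : Mat m, ξ.PosSemidef ∧ ξ.trace = 1 ∧
        ∀ ρ : Mat n, Λ ρ = Φ ρ + (ρ.trace - (Φ ρ).trace) • ξ := by
  obtain ⟨w, hw, hEw⟩ := hE1pos.exists_eq_vecMulVec_of_rank_eq_one hrank
  have hdeficit : ∀ ρ : Mat n, ρ.trace - (Φ ρ).trace = star w ⬝ᵥ ρ *ᵥ w := fun ρ => by
    rw [hE, ← trace_mul_vecMulVec_star, ← hEw, mul_sub, mul_one, trace_sub]
  constructor
  · intro h
    obtain ⟨ξ, hξ, hξtr, hΛΦ⟩ := h.exists_eq_measurePrepare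
      (fun ρ => by rw [LinearMap.sub_apply, trace_sub, hΛtr, hdeficit]) hw
    refine ⟨ξ, hξ, hξtr, fun ρ => ?_⟩
    rw [hdeficit, ← measurePrepare_apply, ← hΛΦ, LinearMap.sub_apply, add_sub_cancel]
  · rintro ⟨ξ, hξ, -, hΛ⟩
    convert isCP_measurePrepare w hξ
    ext1 ρ
    rw [LinearMap.sub_apply, hΛ, hdeficit, add_sub_cancel_left, measurePrepare_apply]

/-- For an operation `Φ` with `I - Φ*(I)` of rank one, a channel `Λ` dominates `Φ` in
the completely positive order iff `Λ(ρ) = Φ(ρ) + (tr ρ - tr Φ(ρ))·ξ` for a state `ξ`. -/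
theorem channel_above_rank_one_deficiency_operation {n m : ℕ}
    (Φ : Mat n →ₗ[ℂ] Mat m) (hΦ : IsCP Φ)
    (E : Mat n) (hE : ∀ ρ : Mat n, (Φ ρ).trace = (ρ * E).trace)
    (hE1pos : ((1 : Mat n) - E).PosSemidef)
    (hrank : ((1 : Mat n) - E).rank = 1)
    (Λ : Mat n →ₗ[ℂ] Mat m) (hΛ : IsCP Λ) (hΛtr : ∀ ρ : Mat n, (Λ ρ).trace = ρ.trace) :
    IsCP (Λ - Φ) ↔
      ∃ ξ : Mat m, ξ.PosSemidef ∧ ξ.trace = 1 ∧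
        ∀ ρ : Mat n, Λ ρ = Φ ρ + (ρ.trace - (Φ ρ).trace) • ξ :=
  channel_above_rank_one_deficiency_operation_general Φ E hE hE1pos hrank Λ hΛtr
end
end

section
/- Let P_x = (I+σ_x)/2 and P_z = (I+σ_z)/2 on ℂ². There is no channel Λ on 2×2 matrices such that both Λ − Φ₁ and Λ − Φ₂ are completely positive, where Φ₁(ρ) = P_x ρ P_x and Φ₂(ρ) = P_z ρ P_z. That is, Φ₁ and Φ₂ have no common upper bound among channels (they are strongly incompatible). -/
open Matrix ComplexOrder
open scoped Kronecker

noncomputable section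

/-- Lüders-type conjugation map `ρ ↦ A * ρ * A` (for self-adjoint `A`). -/
def luders {n : ℕ} (A : Mat n) : Mat n →ₗ[ℂ] Mat n :=
  (LinearMap.mulRight ℂ A).comp (LinearMap.mulLeft ℂ A)

/-- Pauli `σ_x`. -/
def sx : Mat 2 := !![0, 1; 1, 0]
/-- Pauli `σ_z`. -/
def sz : Mat 2 := !![1, 0; 0, -1]

/-- `P_x = (I + σ_x)/2`. -/
def Px : Mat 2 := ((1 : ℂ) / 2) • ((1 : Mat 2) + sx)
/-- `P_z = (I + σ_z)/2`. -/
def Pz : Mat 2 := ((1 : ℂ) / 2) • ((1 : Mat 2) + sz)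

/-!
A common upper bound `Λ` would satisfy `Λ P_x ≥ P_x P_x P_x = P_x`; as `Λ` preserves the
trace, `Λ P_x - P_x` is positive of trace zero, so `Λ P_x = P_x`. But then also
`P_x ≥ P_z P_x P_z = ½ |0⟩⟨0|`, which fails because `P_x - ½ |0⟩⟨0|` has determinant `-1/4`.
-/

lemma IsCP.posSemidef_apply {m n : ℕ} {Φ : Mat m →ₗ[ℂ] Mat n} (hΦ : IsCP Φ) {ρ : Mat m}
    (hρ : ρ.PosSemidef) : (Φ ρ).PosSemidef := by
  have hblock := hΦ 1 (ρ.submatrix Prod.fst Prod.fst) (hρ.submatrix _)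
  exact hblock.submatrix fun i => (i, 0)

lemma luders_apply {n : ℕ} (A ρ : Mat n) : luders A ρ = A * ρ * A := rfl

lemma Matrix.PosSemidef.of_isStarProjection {n 𝕜 : Type*} [Fintype n] [RCLike 𝕜]
    {P : Matrix n n 𝕜} (hP : IsStarProjection P) : P.PosSemidef := by
  have hP' : P = Pᴴ * P := by
    rw [← star_eq_conjTranspose, hP.isSelfAdjoint.star_eq, hP.isIdempotentElem.eq]
  rw [hP']
  exact posSemidef_conjTranspose_mul_self P

lemma Matrix.eq_of_posSemidef_sub_of_trace_eq {n 𝕜 : Type*} [Fintype n] [RCLike 𝕜]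
    {A B : Matrix n n 𝕜} (h : (A - B).PosSemidef) (htr : A.trace = B.trace) : A = B :=
  sub_eq_zero.mp <| h.trace_eq_zero_iff.mp <| by rw [trace_sub, htr, sub_self]

lemma Px_eq : Px = !![2⁻¹, 2⁻¹; 2⁻¹, 2⁻¹] := by
  simp [Px, sx, one_fin_two]

lemma Pz_eq : Pz = !![1, 0; 0, 0] := by
  ext i j; fin_cases i <;> fin_cases j <;> norm_num [Pz, sz, one_fin_two]

lemma isStarProjection_Px : IsStarProjection Px := by
  refine ⟨?_, ?_⟩
  · rw [IsIdempotentElem, Px_eq]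
    ext i j; fin_cases i <;> fin_cases j <;> simp [Matrix.mul_apply] <;> norm_num
  · rw [IsSelfAdjoint, Px_eq]
    ext i j; fin_cases i <;> fin_cases j <;> simp

lemma not_posSemidef_Px_sub_Pz_mul_Px_mul_Pz : ¬ (Px - Pz * Px * Pz).PosSemidef := by
  intro h
  have hdet : (Px - Pz * Px * Pz).det = -4⁻¹ := by
    rw [Px_eq, Pz_eq]; simp [det_fin_two]; norm_num
  have := h.det_nonneg
  rw [hdet, Complex.le_def] at this
  norm_num at this

/-- The Lüders operations of `P_x` and `P_z` have no common channel upper bound in the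
completely positive order: they are strongly incompatible. -/
theorem luders_Px_Pz_strongly_incompatible :
    ¬ ∃ Λ : Mat 2 →ₗ[ℂ] Mat 2, IsCP Λ ∧ (∀ ρ : Mat 2, (Λ ρ).trace = ρ.trace) ∧
        IsCP (Λ - luders Px) ∧ IsCP (Λ - luders Pz) := by
  rintro ⟨Λ, -, htr, hx, hz⟩
  have hPx : Px.PosSemidef := .of_isStarProjection isStarProjection_Px
  have hΛPx : Λ Px = Px := by
    refine eq_of_posSemidef_sub_of_trace_eq ?_ (htr Px)
    simpa [luders_apply, isStarProjection_Px.isIdempotentElem.eq] using hx.posSemidef_apply hPx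
  have hle := hz.posSemidef_apply hPx
  rw [LinearMap.sub_apply, luders_apply, hΛPx] at hle
  exact not_posSemidef_Px_sub_Pz_mul_Px_mul_Pz hle
end
end
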